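/- Let k ≥ 2 and let G be a connected simple graph containing an even cycle C = v1v2⋯v_{2k}v1 such that G − E(C) has exactly 2k components; let Gi denote the component of G − E(C) containing vi, with mi = |E(Gi)|. Let G' = G − Σ_{i=2}^{2k} Σ_{w ∈ N_{Gi}(vi)} w vi + Σ_{i=2}^{2k} Σ_{w ∈ N_{Gi}(vi)} w v1, i.e., every edge of each branch Gi (2 ≤ i ≤ 2k) incident with vi is replaced by the corresponding edge incident with v1. Then W_e(G') ≤ W_e(G), with equality if and only if at most one of the branches G1, …, G_{2k} contains an edge (that is, the cycle C is an end-block of G, so that G ≅ G'). -/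
import Mathlib


open SimpleGraph Finset
open scoped Classical

/-- The distance `d_G(f,g)` between two edges: `0` if they coincide, otherwise the minimum
distance between endpoints plus one (i.e. the distance in the line graph). -/
noncomputable def eDist {V : Type*} (G : SimpleGraph V) (e f : Sym2 V) : ℕ :=
  if e = f then 0 else sInf {n : ℕ | ∃ u ∈ e, ∃ w ∈ f, G.dist u w = n} + 1

/-- The distance `d_G(v,f)` between a vertex and an edge: the minimum distance to an endpoint. -/
noncomputable def vDist {V : Type*} (G : SimpleGraph V) (v : V) (e : Sym2 V) : ℕ :=
  sInf {n : ℕ | ∃ u ∈ e, G.dist v u = n}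

/-- The edge-Wiener index `W_e(G)`: the sum of `eDist` over unordered pairs of edges. -/
noncomputable def edgeWiener {V : Type*} [Fintype V] (G : SimpleGraph V) : ℕ :=
  (∑ e ∈ G.edgeFinset, ∑ f ∈ G.edgeFinset, eDist G e f) / 2

lemma sym2_exists_mem {V : Type*} (e : Sym2 V) : ∃ x, x ∈ e := by
  induction e using Sym2.ind with
  | _ x y => exact ⟨x, Sym2.mem_mk_left x y⟩

lemma eDist_set_nonempty {V : Type*} (G : SimpleGraph V) (e f : Sym2 V) :
    {n : ℕ | ∃ u ∈ e, ∃ w ∈ f, G.dist u w = n}.Nonempty := by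
  obtain ⟨u, hu⟩ := sym2_exists_mem e
  obtain ⟨w, hw⟩ := sym2_exists_mem f
  exact ⟨G.dist u w, u, hu, w, hw, rfl⟩

lemma eDist_le_of {V : Type*} {G G' : SimpleGraph V} {e f e' f' : Sym2 V} (hne : e ≠ f)
    (h : ∀ u ∈ e, ∀ w ∈ f, ∃ u' ∈ e', ∃ w' ∈ f', G'.dist u' w' ≤ G.dist u w) :
    eDist G' e' f' ≤ eDist G e f := by
  unfold eDist
  rw [if_neg hne]
  by_cases h' : e' = f'
  · rw [if_pos h']; exact Nat.zero_le _
  · rw [if_neg h']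
    have hmem := Nat.sInf_mem (eDist_set_nonempty G e f)
    obtain ⟨u, hu, w, hw, hd⟩ := hmem
    obtain ⟨u', hu', w', hw', hle⟩ := h u hu w hw
    have : sInf {n : ℕ | ∃ u ∈ e', ∃ w ∈ f', G'.dist u w = n} ≤ G'.dist u' w' :=
      Nat.sInf_le ⟨u', hu', w', hw', rfl⟩
    omega

lemma eDist_lt_of {V : Type*} {G G' : SimpleGraph V} {e f e' f' : Sym2 V} (hne : e ≠ f)
    (h : ∀ u ∈ e, ∀ w ∈ f, ∃ u' ∈ e', ∃ w' ∈ f', G'.dist u' w' < G.dist u w) :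
    eDist G' e' f' < eDist G e f := by
  unfold eDist
  rw [if_neg hne]
  by_cases h' : e' = f'
  · rw [if_pos h']; exact Nat.succ_pos _
  · rw [if_neg h']
    have hmem := Nat.sInf_mem (eDist_set_nonempty G e f)
    obtain ⟨u, hu, w, hw, hd⟩ := hmem
    obtain ⟨u', hu', w', hw', hle⟩ := h u hu w hw
    have : sInf {n : ℕ | ∃ u ∈ e', ∃ w ∈ f', G'.dist u w = n} ≤ G'.dist u' w' :=
      Nat.sInf_le ⟨u', hu', w', hw', rfl⟩
    omega

lemma eDist_comm {V : Type*} (G : SimpleGraph V) (e f : Sym2 V) :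
    eDist G e f = eDist G f e := by
  unfold eDist
  by_cases h : e = f
  · rw [if_pos h, if_pos h.symm]
  · rw [if_neg h, if_neg (Ne.symm h)]
    congr 1
    congr 1
    ext m
    constructor
    · rintro ⟨u, hu, w, hw, rfl⟩; exact ⟨w, hw, u, hu, SimpleGraph.dist_comm⟩
    · rintro ⟨u, hu, w, hw, rfl⟩; exact ⟨w, hw, u, hu, SimpleGraph.dist_comm⟩

/-- Walk surgery: a vertex map which sends every edge to an edge or collapses it
    produces a walk of no greater length. -/
lemma walk_map_le {V : Type*} {G G' : SimpleGraph V} (θ : V → V)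
    (hθ : ∀ a b, G.Adj a b → θ a = θ b ∨ G'.Adj (θ a) (θ b)) :
    ∀ {u w : V} (p : G.Walk u w), ∃ q : G'.Walk (θ u) (θ w), q.length ≤ p.length := by
  intro u w p
  induction p with
  | nil => exact ⟨SimpleGraph.Walk.nil, le_rfl⟩
  | @cons a b c hadj p ih =>
    obtain ⟨q, hq⟩ := ih
    rcases hθ a b hadj with heq | hadj'
    · exact ⟨q.copy heq.symm rfl, by simpa using Nat.le_succ_of_le hq⟩
    · exact ⟨SimpleGraph.Walk.cons hadj' q, by simpa using hq⟩

lemma dist_map_le {V : Type*} {G G' : SimpleGraph V} (θ : V → V)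
    (hθ : ∀ a b, G.Adj a b → θ a = θ b ∨ G'.Adj (θ a) (θ b))
    {u w : V} (hr : G.Reachable u w) :
    G'.dist (θ u) (θ w) ≤ G.dist u w := by
  obtain ⟨p, hp⟩ := hr.exists_walk_length_eq_dist
  obtain ⟨q, hq⟩ := walk_map_le θ hθ p
  calc G'.dist (θ u) (θ w) ≤ q.length := SimpleGraph.dist_le q
    _ ≤ p.length := hq
    _ = G.dist u w := hp

lemma dist_iso {V : Type*} {G G' : SimpleGraph V} (α : G ≃g G') (u w : V) :
    G'.dist (α u) (α w) = G.dist u w := by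
  have h1 : ∀ (p : G.Walk u w), ∃ q : G'.Walk (α u) (α w), q.length = p.length :=
    fun p => ⟨p.map α.toHom, SimpleGraph.Walk.length_map _ _⟩
  have h2 : ∀ (q : G'.Walk (α u) (α w)), ∃ p : G.Walk u w, p.length = q.length := by
    intro q
    refine ⟨((q.map α.symm.toHom).copy (by simp) (by simp)), by simp⟩
  by_cases hr : G.Reachable u w
  · have hr' : G'.Reachable (α u) (α w) := by
      obtain ⟨p⟩ := hr; obtain ⟨q, _⟩ := h1 p; exact ⟨q⟩
    apply le_antisymm
    · obtain ⟨p, hp⟩ := hr.exists_walk_length_eq_dist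
      obtain ⟨q, hq⟩ := h1 p
      calc G'.dist _ _ ≤ q.length := SimpleGraph.dist_le q
        _ = G.dist u w := by rw [hq, hp]
    · obtain ⟨q, hq⟩ := hr'.exists_walk_length_eq_dist
      obtain ⟨p, hp⟩ := h2 q
      calc G.dist u w ≤ p.length := SimpleGraph.dist_le p
        _ = G'.dist (α u) (α w) := by rw [hp, hq]
  · have hr' : ¬ G'.Reachable (α u) (α w) := by
      intro ⟨q⟩; obtain ⟨p, _⟩ := h2 q; exact hr ⟨p⟩
    rw [SimpleGraph.dist_eq_zero_of_not_reachable hr,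
      SimpleGraph.dist_eq_zero_of_not_reachable hr']

lemma edgeFinset_iso {V : Type*} [Fintype V] {G G' : SimpleGraph V} (α : G ≃g G') :
    G'.edgeFinset = G.edgeFinset.image (Sym2.map α) := by
  ext e
  simp only [Finset.mem_image, SimpleGraph.mem_edgeFinset]
  constructor
  · intro he
    induction e using Sym2.ind with
    | _ x y =>
      refine ⟨s(α.symm x, α.symm y), ?_, by simp [Sym2.map_pair_eq]⟩
      rw [SimpleGraph.mem_edgeSet] at he ⊢
      simpa using α.symm.map_rel_iff.mpr he
  · rintro ⟨f, hf, rfl⟩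
    induction f using Sym2.ind with
    | _ x y =>
      rw [SimpleGraph.mem_edgeSet] at hf
      rw [Sym2.map_pair_eq, SimpleGraph.mem_edgeSet]
      exact α.map_rel_iff.mpr hf

lemma eDist_iso {V : Type*} {G G' : SimpleGraph V} (α : G ≃g G') (e f : Sym2 V) :
    eDist G' (Sym2.map α e) (Sym2.map α f) = eDist G e f := by
  have hinj : Function.Injective (Sym2.map (α : V → V)) :=
    Sym2.map.injective α.toEquiv.injective
  unfold eDist
  by_cases h : e = f
  · rw [if_pos h, if_pos (by rw [h])]
  · rw [if_neg h, if_neg (fun hc => h (hinj hc))]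
    congr 2
    ext m
    constructor
    · rintro ⟨u', hu', w', hw', rfl⟩
      rw [Sym2.mem_map] at hu' hw'
      obtain ⟨u, hu, rfl⟩ := hu'
      obtain ⟨w, hw, rfl⟩ := hw'
      exact ⟨u, hu, w, hw, (dist_iso α u w).symm⟩
    · rintro ⟨u, hu, w, hw, rfl⟩
      exact ⟨α u, Sym2.mem_map.mpr ⟨u, hu, rfl⟩, α w, Sym2.mem_map.mpr ⟨w, hw, rfl⟩,
        dist_iso α u w⟩

lemma edgeWiener_iso {V : Type*} [Fintype V] {G G' : SimpleGraph V} (α : G ≃g G') :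
    edgeWiener G' = edgeWiener G := by
  unfold edgeWiener
  congr 1
  rw [edgeFinset_iso α]
  have hinj : ∀ x ∈ G.edgeFinset, ∀ y ∈ G.edgeFinset, Sym2.map ⇑α x = Sym2.map ⇑α y → x = y :=
    fun x _ y _ h => Sym2.map.injective α.toEquiv.injective h
  rw [Finset.sum_image hinj]
  refine Finset.sum_congr rfl fun e _ => ?_
  rw [Finset.sum_image hinj]
  exact Finset.sum_congr rfl fun f _ => eDist_iso α e f

structure Ctx (V : Type*) [Fintype V] where
  n : ℕ
  G : SimpleGraph V
  H : SimpleGraph V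
  G' : SimpleGraph V
  v : ℕ → V
  hn : 4 ≤ n
  hconn : G.Connected
  hinj : ∀ i < n, ∀ j < n, v i = v j → i = j
  hcyc : ∀ i < n, G.Adj (v i) (v ((i + 1) % n))
  hH : H = G.deleteEdges {e | ∃ i < n, e = s(v i, v ((i + 1) % n))}
  hsep : ∀ i < n, ∀ j < n, i ≠ j → ¬ H.Reachable (v i) (v j)
  hG' : G' = SimpleGraph.fromRel (fun a b =>
        (∃ i < n, a = v i ∧ b = v ((i + 1) % n)) ∨
        (H.Adj a b ∧ ∀ i, 1 ≤ i → i < n → a ≠ v i ∧ b ≠ v i) ∨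
        (∃ i, 1 ≤ i ∧ i < n ∧ H.Adj a (v i) ∧ b = v 0))

namespace Ctx
variable {V : Type*} [Fintype V] (c : Ctx V)

def ced (a : ℕ) : Sym2 V := s(c.v a, c.v ((a + 1) % c.n))

lemma n_pos : 0 < c.n := by have := c.hn; omega

lemma vne {a b : ℕ} (ha : a < c.n) (hb : b < c.n) (hab : a ≠ b) : c.v a ≠ c.v b :=
  fun h => hab (c.hinj a ha b hb h)

lemma succ_lt {a : ℕ} : (a + 1) % c.n < c.n := Nat.mod_lt _ c.n_pos

lemma cyc_ne {a : ℕ} (ha : a < c.n) : a ≠ (a + 1) % c.n := by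
  have hn := c.hn
  rcases Nat.lt_or_ge (a + 1) c.n with h | h
  · rw [Nat.mod_eq_of_lt h]; omega
  · have : a + 1 = c.n := by omega
    rw [this, Nat.mod_self]; omega

lemma Hadj_iff {a b : V} :
    c.H.Adj a b ↔ c.G.Adj a b ∧ ¬ ∃ i < c.n, s(a, b) = s(c.v i, c.v ((i + 1) % c.n)) := by
  rw [c.hH, SimpleGraph.deleteEdges_adj]; rfl

lemma Hadj_G {a b : V} (h : c.H.Adj a b) : c.G.Adj a b := (c.Hadj_iff.mp h).1

lemma G_adj_cases {a b : V} (h : c.G.Adj a b) :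
    c.H.Adj a b ∨ ∃ t < c.n, s(a, b) = c.ced t := by
  by_cases h' : ∃ t < c.n, s(a, b) = c.ced t
  · exact Or.inr h'
  · exact Or.inl (c.Hadj_iff.mpr ⟨h, h'⟩)

lemma rho_exists (x : V) : ∃ i, i < c.n ∧ c.H.Reachable x (c.v i) := by
  have key : ∀ (y z : V) (_ : c.G.Walk y z),
      (∃ i, i < c.n ∧ c.H.Reachable z (c.v i)) →
      (∃ i, i < c.n ∧ c.H.Reachable y (c.v i)) := by
    intro y z p
    induction p with
    | nil => exact id
    | @cons a b _ hadj p ih =>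
      intro hz
      obtain ⟨i, hi, hr⟩ := ih hz
      rcases c.G_adj_cases hadj with hH' | ⟨t, ht, hced⟩
      · exact ⟨i, hi, hH'.reachable.trans hr⟩
      · rw [ced, Sym2.eq_iff] at hced
        rcases hced with ⟨rfl, -⟩ | ⟨rfl, -⟩
        · exact ⟨t, ht, Reachable.refl _⟩
        · exact ⟨(t + 1) % c.n, c.succ_lt, Reachable.refl _⟩
  obtain ⟨p⟩ := c.hconn.preconnected x (c.v 0)
  exact key x (c.v 0) p ⟨0, c.n_pos, Reachable.refl _⟩

noncomputable def rho (x : V) : ℕ :=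
  if h : ∃ i, i < c.n ∧ c.H.Reachable x (c.v i) then h.choose else 0

lemma rho_spec (x : V) : c.rho x < c.n ∧ c.H.Reachable x (c.v (c.rho x)) := by
  have h := c.rho_exists x
  rw [rho, dif_pos h]
  exact h.choose_spec

lemma rho_eq {x : V} {i : ℕ} (hi : i < c.n) (hr : c.H.Reachable x (c.v i)) :
    c.rho x = i := by
  by_contra hne
  exact c.hsep _ (c.rho_spec x).1 i hi hne ((c.rho_spec x).2.symm.trans hr)

lemma rho_v {t : ℕ} (ht : t < c.n) : c.rho (c.v t) = t :=
  c.rho_eq ht (Reachable.refl _)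

lemma rho_reach {a b : V} (h : c.H.Reachable a b) : c.rho a = c.rho b :=
  c.rho_eq (c.rho_spec b).1 (h.trans (c.rho_spec b).2)

lemma rho_adj {a b : V} (h : c.H.Adj a b) : c.rho a = c.rho b :=
  c.rho_reach h.reachable


noncomputable def beta (x : V) : V :=
  if ∃ t, t < c.n ∧ x = c.v t then c.v 0 else x

lemma beta_v {t : ℕ} (ht : t < c.n) : c.beta (c.v t) = c.v 0 :=
  if_pos ⟨t, ht, rfl⟩

lemma beta_nv {x : V} (hx : ¬ ∃ t, t < c.n ∧ x = c.v t) : c.beta x = x := if_neg hx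

lemma beta_cases (x : V) : c.beta x = c.v 0 ∨ (c.beta x = x ∧ ¬ ∃ t, t < c.n ∧ x = c.v t) := by
  by_cases h : ∃ t, t < c.n ∧ x = c.v t
  · exact Or.inl (if_pos h)
  · exact Or.inr ⟨if_neg h, h⟩

/-- an `H`-edge has at most one endpoint on the cycle, and that endpoint is its root -/
lemma adj_root {a b : V} (h : c.H.Adj a b) {t : ℕ} (ht : t < c.n) (hb : b = c.v t) :
    ¬ ∃ s, s < c.n ∧ a = c.v s := by
  rintro ⟨s, hs, rfl⟩
  have h1 : c.rho (c.v s) = c.rho b := c.rho_adj h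
  rw [hb, c.rho_v hs, c.rho_v ht] at h1
  exact h.ne (by rw [hb, h1])

lemma G'_cyc {a : ℕ} (ha : a < c.n) : c.G'.Adj (c.v a) (c.v ((a + 1) % c.n)) := by
  rw [c.hG', SimpleGraph.fromRel_adj]
  exact ⟨c.vne ha c.succ_lt (c.cyc_ne ha), Or.inl (Or.inl ⟨a, ha, rfl, rfl⟩)⟩

lemma beta_compat {a b : V} (h : c.H.Adj a b) : c.G'.Adj (c.beta a) (c.beta b) := by
  -- helper : one endpoint is a cycle vertex `v i`
  have key : ∀ x y : V, c.H.Adj x y → ∀ i < c.n, x = c.v i →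
      c.G'.Adj (c.beta x) (c.beta y) := by
    intro x y hxy i hi hx
    have hyn : ¬ ∃ t, t < c.n ∧ y = c.v t := c.adj_root hxy.symm hi hx
    rw [hx, c.beta_v hi, c.beta_nv hyn]
    have hyne : y ≠ c.v 0 := by
      intro hy; exact hyn ⟨0, c.n_pos, hy⟩
    rw [c.hG', SimpleGraph.fromRel_adj]
    refine ⟨fun hh => hyne hh.symm, ?_⟩
    rcases Nat.eq_zero_or_pos i with rfl | hipos
    · -- x = v 0 : use the second disjunct
      refine Or.inl (Or.inr (Or.inl ⟨hx ▸ hxy, fun j h1 h2 => ?_⟩))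
      constructor
      · exact c.vne hi h2 (by omega)
      · intro hy; exact hyn ⟨j, h2, hy⟩
    · -- use the third disjunct, oriented y → v 0
      exact Or.inr (Or.inr (Or.inr ⟨i, hipos, hi, hx ▸ hxy.symm, rfl⟩))
  by_cases hacyc : ∃ t, t < c.n ∧ a = c.v t
  · obtain ⟨i, hi, ha⟩ := hacyc
    exact key a b h i hi ha
  · by_cases hbcyc : ∃ t, t < c.n ∧ b = c.v t
    · obtain ⟨i, hi, hb⟩ := hbcyc
      exact (key b a h.symm i hi hb).symm
    · rw [c.beta_nv hacyc, c.beta_nv hbcyc]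
      rw [c.hG', SimpleGraph.fromRel_adj]
      refine ⟨h.ne, Or.inl (Or.inr (Or.inl ⟨h, fun j h1 h2 => ?_⟩))⟩
      exact ⟨fun ha => hacyc ⟨j, h2, ha⟩, fun hb => hbcyc ⟨j, h2, hb⟩⟩

lemma beta_G_compat {a b : V} (h : c.G.Adj a b) :
    c.beta a = c.beta b ∨ c.G'.Adj (c.beta a) (c.beta b) := by
  rcases c.G_adj_cases h with hH' | ⟨t, ht, hced⟩
  · exact Or.inr (c.beta_compat hH')
  · rw [ced, Sym2.eq_iff] at hced
    rcases hced with ⟨rfl, rfl⟩ | ⟨rfl, rfl⟩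
    · rw [c.beta_v ht, c.beta_v c.succ_lt]; exact Or.inl rfl
    · rw [c.beta_v ht, c.beta_v c.succ_lt]; exact Or.inl rfl

noncomputable def dmap (i : ℕ) (x : V) : V :=
  if c.rho x = i ∧ ¬ ∃ t, t < c.n ∧ x = c.v t then x
  else c.v ((c.rho x + (c.n - i)) % c.n)

lemma dmap_v {t : ℕ} (ht : t < c.n) (i : ℕ) :
    c.dmap i (c.v t) = c.v ((t + (c.n - i)) % c.n) := by
  rw [dmap, if_neg (fun hh => hh.2 ⟨t, ht, rfl⟩), c.rho_v ht]

lemma dmap_beta {i : ℕ} (hi : i < c.n) {x : V} (hx : c.rho x = i) :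
    c.dmap i x = c.beta x := by
  by_cases h : ∃ t, t < c.n ∧ x = c.v t
  · obtain ⟨t, ht, rfl⟩ := h
    rw [c.dmap_v ht, c.beta_v ht, c.rho_v ht] at *
    rw [hx]
    congr 1
    rw [Nat.add_sub_cancel' (le_of_lt hi), Nat.mod_self]
  · rw [dmap, if_pos ⟨hx, h⟩, c.beta_nv h]

lemma dmap_ncyc {i : ℕ} {x : V} (hx : c.rho x ≠ i) :
    c.dmap i x = c.v ((c.rho x + (c.n - i)) % c.n) := by
  rw [dmap, if_neg (fun hh => hx hh.1)]

lemma mod_shift (a s : ℕ) : ((a + 1) % c.n + s) % c.n = ((a + s) % c.n + 1) % c.n := by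
  rw [Nat.mod_add_mod, Nat.mod_add_mod]
  congr 1
  omega

lemma dmap_compat {i : ℕ} (hi : i < c.n) {a b : V} (h : c.G.Adj a b) :
    c.dmap i a = c.dmap i b ∨ c.G'.Adj (c.dmap i a) (c.dmap i b) := by
  rcases c.G_adj_cases h with hH' | ⟨t, ht, hced⟩
  · by_cases hj : c.rho a = i
    · have hjb : c.rho b = i := by rw [← c.rho_adj hH', hj]
      rw [c.dmap_beta hi hj, c.dmap_beta hi hjb]
      exact Or.inr (c.beta_compat hH')
    · have hjb : c.rho b ≠ i := by rw [← c.rho_adj hH']; exact hj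
      rw [c.dmap_ncyc hj, c.dmap_ncyc hjb, c.rho_adj hH']
      exact Or.inl rfl
  · have key : ∀ x y : V, x = c.v t → y = c.v ((t + 1) % c.n) →
        c.G'.Adj (c.dmap i x) (c.dmap i y) := by
      intro x y hx hy
      rw [hx, hy, c.dmap_v ht, c.dmap_v c.succ_lt, c.mod_shift]
      exact c.G'_cyc (Nat.mod_lt _ c.n_pos)
    rw [ced, Sym2.eq_iff] at hced
    rcases hced with ⟨ha, hb⟩ | ⟨ha, hb⟩
    · exact Or.inr (key a b ha hb)
    · exact Or.inr ((key b a hb ha).symm)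


noncomputable def CF : Finset (Sym2 V) := (Finset.range c.n).image c.ced

noncomputable def BF : Finset (Sym2 V) := c.H.edgeFinset

noncomputable def bmap : Sym2 V → Sym2 V := Sym2.map c.beta

lemma ced_inj {a b : ℕ} (ha : a < c.n) (hb : b < c.n) (h : c.ced a = c.ced b) : a = b := by
  have hn := c.hn
  rw [ced, ced, Sym2.eq_iff] at h
  rcases h with ⟨h1, h2⟩ | ⟨h1, h2⟩
  · exact c.hinj a ha b hb h1
  · have e1 : a = (b + 1) % c.n := c.hinj _ ha _ c.succ_lt h1
    have e2 : (a + 1) % c.n = b := c.hinj _ c.succ_lt _ hb h2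
    -- then b = (b + 2) % n, impossible for n ≥ 3
    have e3 : (b + 2) % c.n = b := by
      rw [show b + 2 = (b + 1) + 1 by ring, ← Nat.mod_add_mod, ← e1, e2]
    rcases Nat.lt_or_ge (b + 2) c.n with hlt | hge
    · rw [Nat.mod_eq_of_lt hlt] at e3; omega
    · have : (b + 2) % c.n = b + 2 - c.n := by
        rw [Nat.mod_eq_sub_mod hge, Nat.mod_eq_of_lt (by omega)]
      omega

lemma mem_CF_iff {e : Sym2 V} : e ∈ c.CF ↔ ∃ t < c.n, e = c.ced t := by
  simp only [CF, Finset.mem_image, Finset.mem_range]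
  constructor
  · rintro ⟨t, ht, rfl⟩; exact ⟨t, ht, rfl⟩
  · rintro ⟨t, ht, rfl⟩; exact ⟨t, ht, rfl⟩

lemma mem_BF_iff {e : Sym2 V} : e ∈ c.BF ↔ e ∈ c.H.edgeSet := SimpleGraph.mem_edgeFinset

lemma ced_not_H {t : ℕ} (ht : t < c.n) : c.ced t ∉ c.H.edgeSet := by
  intro hmem
  rw [ced, SimpleGraph.mem_edgeSet] at hmem
  exact (c.Hadj_iff.mp hmem).2 ⟨t, ht, rfl⟩

lemma disj_CB : Disjoint c.CF c.BF := by
  rw [Finset.disjoint_left]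
  intro e he hb
  obtain ⟨t, ht, rfl⟩ := c.mem_CF_iff.mp he
  exact c.ced_not_H ht (c.mem_BF_iff.mp hb)

lemma E_G : c.G.edgeFinset = c.CF ∪ c.BF := by
  ext e
  induction e using Sym2.ind with
  | _ a b =>
    rw [SimpleGraph.mem_edgeFinset, SimpleGraph.mem_edgeSet, Finset.mem_union,
      c.mem_CF_iff, c.mem_BF_iff, SimpleGraph.mem_edgeSet]
    constructor
    · intro h
      rcases c.G_adj_cases h with h' | ⟨t, ht, h'⟩
      · exact Or.inr h'
      · exact Or.inl ⟨t, ht, h'⟩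
    · rintro (⟨t, ht, h'⟩ | h')
      · rw [ced, Sym2.eq_iff] at h'
        rcases h' with ⟨rfl, rfl⟩ | ⟨rfl, rfl⟩
        · exact c.hcyc t ht
        · exact (c.hcyc t ht).symm
      · exact c.Hadj_G h'

/-- if `beta z` is a cycle vertex then it is `v 0` -/
lemma beta_eq_cyc {z : V} {s : ℕ} (hs : s < c.n) (h : c.beta z = c.v s) :
    c.v s = c.v 0 := by
  rcases c.beta_cases z with h' | ⟨h', hz⟩
  · rw [← h, h']
  · exact absurd ⟨s, hs, (h'.symm.trans h : z = c.v s)⟩ hz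

lemma disj_CB' : Disjoint c.CF (c.BF.image c.bmap) := by
  rw [Finset.disjoint_left]
  intro e he hb
  obtain ⟨t, ht, rfl⟩ := c.mem_CF_iff.mp he
  obtain ⟨f, hf, hfe⟩ := Finset.mem_image.mp hb
  induction f using Sym2.ind with
  | _ x y =>
    rw [bmap, Sym2.map_pair_eq, ced, Sym2.eq_iff] at hfe
    have hne := c.vne ht c.succ_lt (c.cyc_ne ht)
    rcases hfe with ⟨h1, h2⟩ | ⟨h1, h2⟩
    · exact hne ((c.beta_eq_cyc ht h1).trans (c.beta_eq_cyc c.succ_lt h2).symm)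
    · exact hne ((c.beta_eq_cyc ht h2).trans (c.beta_eq_cyc c.succ_lt h1).symm)

lemma E_G' : c.G'.edgeFinset = c.CF ∪ c.BF.image c.bmap := by
  have forward : ∀ x y : V, x ≠ y →
      ((∃ i < c.n, x = c.v i ∧ y = c.v ((i + 1) % c.n)) ∨
        (c.H.Adj x y ∧ ∀ i, 1 ≤ i → i < c.n → x ≠ c.v i ∧ y ≠ c.v i) ∨
        (∃ i, 1 ≤ i ∧ i < c.n ∧ c.H.Adj x (c.v i) ∧ y = c.v 0)) →
      s(x, y) ∈ c.CF ∪ c.BF.image c.bmap := by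
    intro x y hne hR
    rw [Finset.mem_union]
    rcases hR with ⟨i, hi, rfl, rfl⟩ | ⟨hadj, hav⟩ | ⟨i, h1, hi, hadj, rfl⟩
    · exact Or.inl (c.mem_CF_iff.mpr ⟨i, hi, rfl⟩)
    · refine Or.inr (Finset.mem_image.mpr ⟨s(x, y), c.mem_BF_iff.mpr hadj, ?_⟩)
      have hfix : ∀ z : V, (∀ j, 1 ≤ j → j < c.n → z ≠ c.v j) → c.beta z = z := by
        intro z hz
        rcases c.beta_cases z with h' | ⟨h', _⟩
        · by_cases hcy : ∃ t, t < c.n ∧ z = c.v t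
          · obtain ⟨t, ht, rfl⟩ := hcy
            rcases Nat.eq_zero_or_pos t with rfl | htpos
            · exact h'
            · exact absurd rfl (hz t htpos ht)
          · exact c.beta_nv hcy
        · exact h'
      rw [bmap, Sym2.map_pair_eq,
        hfix x (fun j h1 h2 => (hav j h1 h2).1), hfix y (fun j h1 h2 => (hav j h1 h2).2)]
    · refine Or.inr (Finset.mem_image.mpr ⟨s(x, c.v i), c.mem_BF_iff.mpr hadj, ?_⟩)
      have hxn : ¬ ∃ t, t < c.n ∧ x = c.v t := c.adj_root hadj hi rfl
      rw [bmap, Sym2.map_pair_eq, c.beta_nv hxn, c.beta_v hi]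
  ext e
  constructor
  · intro he
    induction e using Sym2.ind with
    | _ x y =>
      rw [SimpleGraph.mem_edgeFinset, SimpleGraph.mem_edgeSet, c.hG',
        SimpleGraph.fromRel_adj] at he
      obtain ⟨hne, hR | hR⟩ := he
      · exact forward x y hne hR
      · rw [Sym2.eq_swap]
        exact forward y x hne.symm hR
  · intro he
    rw [Finset.mem_union] at he
    rw [SimpleGraph.mem_edgeFinset]
    rcases he with he | he
    · obtain ⟨t, ht, rfl⟩ := c.mem_CF_iff.mp he
      rw [ced, SimpleGraph.mem_edgeSet]
      exact c.G'_cyc ht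
    · obtain ⟨f, hf, rfl⟩ := Finset.mem_image.mp he
      induction f using Sym2.ind with
      | _ x y =>
        rw [bmap, Sym2.map_pair_eq, SimpleGraph.mem_edgeSet]
        exact c.beta_compat (c.mem_BF_iff.mp hf)


noncomputable def rhoE (e : Sym2 V) : ℕ := c.rho (Classical.choose (sym2_exists_mem e))

lemma rhoE_lt (e : Sym2 V) : c.rhoE e < c.n := (c.rho_spec _).1

lemma rho_of_mem {f : Sym2 V} (hf : f ∈ c.BF) {x : V} (hx : x ∈ f) :
    c.rho x = c.rhoE f := by
  induction f using Sym2.ind with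
  | _ a b =>
    have hadj : c.H.Adj a b := c.mem_BF_iff.mp hf
    have hch : Classical.choose (sym2_exists_mem s(a, b)) ∈ s(a, b) :=
      Classical.choose_spec (sym2_exists_mem s(a, b))
    have hab : c.rho a = c.rho b := c.rho_adj hadj
    rw [Sym2.mem_iff] at hx hch
    rw [rhoE]
    rcases hx with rfl | rfl <;> rcases hch with h | h <;> rw [h] <;> omega

lemma reach_of_mem {f : Sym2 V} (hf : f ∈ c.BF) {x : V} (hx : x ∈ f) :
    c.H.Reachable x (c.v (c.rhoE f)) := by
  have h := (c.rho_spec x).2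
  rwa [c.rho_of_mem hf hx] at h

lemma bmap_injOn : ∀ f ∈ c.BF, ∀ g ∈ c.BF, c.bmap f = c.bmap g → f = g := by
  -- pointwise injectivity for endpoints of H-edges
  have key : ∀ x y x' y' : V, c.H.Adj x y → c.H.Adj x' y' → c.beta x = c.beta x' →
      x = x' ∨ ((∃ s, s < c.n ∧ x = c.v s) ∧ (∃ s, s < c.n ∧ x' = c.v s)) := by
    intro x y x' y' _ _ hb
    by_cases hx : ∃ s, s < c.n ∧ x = c.v s
    · by_cases hx' : ∃ s, s < c.n ∧ x' = c.v s
      · exact Or.inr ⟨hx, hx'⟩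
      · obtain ⟨s, hs, rfl⟩ := hx
        rw [c.beta_v hs, c.beta_nv hx'] at hb
        exact absurd ⟨0, c.n_pos, hb.symm⟩ hx'
    · by_cases hx' : ∃ s, s < c.n ∧ x' = c.v s
      · obtain ⟨s, hs, rfl⟩ := hx'
        rw [c.beta_v hs, c.beta_nv hx] at hb
        exact absurd ⟨0, c.n_pos, hb⟩ hx
      · rw [c.beta_nv hx, c.beta_nv hx'] at hb
        exact Or.inl hb
  -- main argument for matched orientation
  have main : ∀ x y x' y' : V, c.H.Adj x y → c.H.Adj x' y' →
      c.beta x = c.beta x' → c.beta y = c.beta y' → s(x, y) = s(x', y') := by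
    intro x y x' y' h h' hbx hby
    rcases key x y x' y' h h' hbx with heq | ⟨⟨s, hs, rfl⟩, ⟨s', hs', rfl⟩⟩
    · subst heq
      rcases key y x y' x h.symm h'.symm hby with heq2 | ⟨⟨t, ht, rfl⟩, ⟨t', ht', rfl⟩⟩
      · subst heq2; rfl
      · -- x = x', y and y' are cycle vertices with the same root
        have h1 : t = c.rho x := by rw [← c.rho_v ht]; exact (c.rho_adj h.symm)
        have h2 : t' = c.rho x := by rw [← c.rho_v ht']; exact (c.rho_adj h'.symm)
        rw [h1, h2]
    · -- x, x' cycle vertices; then y, y' are not cycle vertices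
      have hy : ¬ ∃ u, u < c.n ∧ y = c.v u := c.adj_root h.symm hs rfl
      have hy' : ¬ ∃ u, u < c.n ∧ y' = c.v u := c.adj_root h'.symm hs' rfl
      rw [c.beta_nv hy, c.beta_nv hy'] at hby
      subst hby
      have h1 : s = c.rho y := by rw [← c.rho_v hs]; exact c.rho_adj h
      have h2 : s' = c.rho y := by rw [← c.rho_v hs']; exact c.rho_adj h'
      rw [h1, h2]
  intro f hf g hg hfg
  induction f using Sym2.ind with
  | _ x y =>
    induction g using Sym2.ind with
    | _ x' y' =>
      have h : c.H.Adj x y := c.mem_BF_iff.mp hf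
      have h' : c.H.Adj x' y' := c.mem_BF_iff.mp hg
      rw [bmap, Sym2.map_pair_eq, Sym2.map_pair_eq, Sym2.eq_iff] at hfg
      rcases hfg with ⟨h1, h2⟩ | ⟨h1, h2⟩
      · exact main x y x' y' h h' h1 h2
      · rw [main x y y' x' h h'.symm h1 h2]
        exact Sym2.eq_swap

/-- strict walk surgery for `beta` : a walk using a non-`H` edge strictly shortens -/
lemma walk_beta : ∀ {u w : V} (p : c.G.Walk u w),
    ∃ q : c.G'.Walk (c.beta u) (c.beta w),
      q.length ≤ p.length ∧ ((∃ e ∈ p.edges, e ∉ c.H.edgeSet) → q.length < p.length) := by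
  intro u w p
  induction p with
  | nil =>
    refine ⟨SimpleGraph.Walk.nil, le_rfl, ?_⟩
    rintro ⟨e, he, -⟩
    simp [SimpleGraph.Walk.edges_nil] at he
  | @cons a b w hadj p ih =>
    obtain ⟨q, h1, h2⟩ := ih
    by_cases hH' : c.H.Adj a b
    · refine ⟨SimpleGraph.Walk.cons (c.beta_compat hH') q, by simp; omega, ?_⟩
      rintro ⟨e, he, hne⟩
      rw [SimpleGraph.Walk.edges_cons, List.mem_cons] at he
      rcases he with rfl | he
      · exact absurd ((SimpleGraph.mem_edgeSet _).mpr hH') hne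
      · have := h2 ⟨e, he, hne⟩
        simp only [SimpleGraph.Walk.length_cons]
        omega
    · rcases c.G_adj_cases hadj with h' | ⟨t, ht, hced⟩
      · exact absurd h' hH'
      · have hba : c.beta b = c.beta a := by
          rw [ced, Sym2.eq_iff] at hced
          rcases hced with ⟨rfl, rfl⟩ | ⟨rfl, rfl⟩
          · rw [c.beta_v ht, c.beta_v c.succ_lt]
          · rw [c.beta_v ht, c.beta_v c.succ_lt]
        refine ⟨q.copy hba rfl, ?_, fun _ => ?_⟩ <;>
          simp only [SimpleGraph.Walk.length_copy, SimpleGraph.Walk.length_cons] <;> omega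

lemma dist_beta_le (u w : V) : c.G'.dist (c.beta u) (c.beta w) ≤ c.G.dist u w :=
  dist_map_le c.beta (fun a b h => c.beta_G_compat h) (c.hconn.preconnected u w)

lemma dist_dmap_le {i : ℕ} (hi : i < c.n) (u w : V) :
    c.G'.dist (c.dmap i u) (c.dmap i w) ≤ c.G.dist u w :=
  dist_map_le (c.dmap i) (fun a b h => c.dmap_compat hi h) (c.hconn.preconnected u w)

lemma dist_beta_lt {u w : V} (h : c.rho u ≠ c.rho w) :
    c.G'.dist (c.beta u) (c.beta w) < c.G.dist u w := by
  obtain ⟨p, hp⟩ := (c.hconn.preconnected u w).exists_walk_length_eq_dist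
  obtain ⟨q, h1, h2⟩ := c.walk_beta p
  have hne : ∃ e ∈ p.edges, e ∉ c.H.edgeSet := by
    by_contra hall
    push_neg at hall
    have : c.H.Reachable u w := ⟨p.transfer c.H hall⟩
    exact h (c.rho_reach this)
  calc c.G'.dist (c.beta u) (c.beta w) ≤ q.length := SimpleGraph.dist_le q
    _ < p.length := h2 hne
    _ = c.G.dist u w := hp


lemma dmap0_fix {t : ℕ} (ht : t < c.n) : c.dmap 0 (c.v t) = c.v t := by
  rw [c.dmap_v ht]
  congr 1
  rw [Nat.sub_zero, Nat.add_mod_right, Nat.mod_eq_of_lt ht]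

lemma mem_CF_vertex {e : Sym2 V} {u : V} (he : e ∈ c.CF) (hu : u ∈ e) :
    ∃ t, t < c.n ∧ u = c.v t := by
  obtain ⟨a, ha, rfl⟩ := c.mem_CF_iff.mp he
  rw [ced, Sym2.mem_iff] at hu
  rcases hu with rfl | rfl
  · exact ⟨a, ha, rfl⟩
  · exact ⟨(a + 1) % c.n, c.succ_lt, rfl⟩

lemma eDist_self {V' : Type*} (G₀ : SimpleGraph V') (e : Sym2 V') : eDist G₀ e e = 0 := by
  rw [eDist, if_pos rfl]

lemma eDist_CC {e f : Sym2 V} (he : e ∈ c.CF) (hf : f ∈ c.CF) :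
    eDist c.G' e f ≤ eDist c.G e f := by
  by_cases hef : e = f
  · subst hef; rw [eDist_self, eDist_self]
  · refine eDist_le_of hef ?_
    intro u hu w hw
    obtain ⟨t, ht, rfl⟩ := c.mem_CF_vertex he hu
    obtain ⟨r, hr, rfl⟩ := c.mem_CF_vertex hf hw
    refine ⟨c.v t, hu, c.v r, hw, ?_⟩
    have := c.dist_dmap_le c.n_pos (c.v t) (c.v r)
    rwa [c.dmap0_fix ht, c.dmap0_fix hr] at this

lemma eDist_BB {f g : Sym2 V} (hf : f ∈ c.BF) (hg : g ∈ c.BF) :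
    eDist c.G' (c.bmap f) (c.bmap g) ≤ eDist c.G f g := by
  by_cases hfg : f = g
  · subst hfg; rw [eDist_self, eDist_self]
  · refine eDist_le_of hfg ?_
    intro u hu w hw
    exact ⟨c.beta u, Sym2.mem_map.mpr ⟨u, hu, rfl⟩, c.beta w, Sym2.mem_map.mpr ⟨w, hw, rfl⟩,
      c.dist_beta_le u w⟩

lemma eDist_BB_lt {f g : Sym2 V} (hf : f ∈ c.BF) (hg : g ∈ c.BF)
    (hne : c.rhoE f ≠ c.rhoE g) :
    eDist c.G' (c.bmap f) (c.bmap g) < eDist c.G f g := by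
  have hfg : f ≠ g := fun h => hne (by rw [h])
  refine eDist_lt_of hfg ?_
  intro u hu w hw
  refine ⟨c.beta u, Sym2.mem_map.mpr ⟨u, hu, rfl⟩, c.beta w, Sym2.mem_map.mpr ⟨w, hw, rfl⟩, ?_⟩
  apply c.dist_beta_lt
  rw [c.rho_of_mem hf hu, c.rho_of_mem hg hw]
  exact hne

lemma eDist_CB {a : ℕ} (ha : a < c.n) {f : Sym2 V} (hf : f ∈ c.BF) :
    eDist c.G' (c.ced ((a + (c.n - c.rhoE f)) % c.n)) (c.bmap f) ≤ eDist c.G (c.ced a) f := by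
  have hne : c.ced a ≠ f := fun h => c.ced_not_H ha (h ▸ c.mem_BF_iff.mp hf)
  refine eDist_le_of hne ?_
  intro u hu w hw
  set i := c.rhoE f with hidef
  have hi : i < c.n := c.rhoE_lt f
  refine ⟨c.dmap i u, ?_, c.dmap i w, ?_, c.dist_dmap_le hi u w⟩
  · rw [ced, Sym2.mem_iff] at hu
    rcases hu with rfl | rfl
    · rw [c.dmap_v ha, ced]
      exact Sym2.mem_mk_left _ _
    · rw [c.dmap_v c.succ_lt, ced, c.mod_shift]
      exact Sym2.mem_mk_right _ _
  · rw [c.dmap_beta hi (c.rho_of_mem hf hw)]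
    exact Sym2.mem_map.mpr ⟨w, hw, rfl⟩


lemma mod_cancel {a s t : ℕ} (ha : a < c.n) (hst : s + t = c.n) :
    ((a + s) % c.n + t) % c.n = a := by
  rw [Nat.mod_add_mod, add_assoc, hst, Nat.add_mod_right, Nat.mod_eq_of_lt ha]

/-- rotation-reindexing of a sum over cycle edges -/
lemma sum_CF_rot (r : ℕ) (hr : r < c.n) (F : Sym2 V → ℕ) :
    ∑ a ∈ Finset.range c.n, F (c.ced ((a + (c.n - r)) % c.n)) =
    ∑ a ∈ Finset.range c.n, F (c.ced a) := by
  refine Finset.sum_nbij' (fun a => (a + (c.n - r)) % c.n) (fun b => (b + r) % c.n)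
    ?_ ?_ ?_ ?_ ?_
  · intro a _; exact Finset.mem_range.mpr (Nat.mod_lt _ c.n_pos)
  · intro a _; exact Finset.mem_range.mpr (Nat.mod_lt _ c.n_pos)
  · intro a ha
    exact c.mod_cancel (Finset.mem_range.mp ha) (by omega)
  · intro a ha
    exact c.mod_cancel (Finset.mem_range.mp ha) (by omega)
  · intro a _; rfl

lemma sum_CF_eq (F : Sym2 V → ℕ) :
    ∑ e ∈ c.CF, F e = ∑ a ∈ Finset.range c.n, F (c.ced a) := by
  rw [CF, Finset.sum_image]
  intro a ha b hb h
  exact c.ced_inj (Finset.mem_range.mp ha) (Finset.mem_range.mp hb) h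

lemma sum_BF'_eq (F : Sym2 V → ℕ) :
    ∑ e ∈ c.BF.image c.bmap, F e = ∑ f ∈ c.BF, F (c.bmap f) :=
  Finset.sum_image c.bmap_injOn

lemma block_CC :
    ∑ e ∈ c.CF, ∑ f ∈ c.CF, eDist c.G' e f ≤ ∑ e ∈ c.CF, ∑ f ∈ c.CF, eDist c.G e f :=
  Finset.sum_le_sum fun e he => Finset.sum_le_sum fun f hf => c.eDist_CC he hf

lemma block_CB :
    ∑ e ∈ c.CF, ∑ f ∈ c.BF, eDist c.G' e (c.bmap f) ≤
      ∑ e ∈ c.CF, ∑ f ∈ c.BF, eDist c.G e f := by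
  rw [Finset.sum_comm]
  conv_rhs => rw [Finset.sum_comm]
  refine Finset.sum_le_sum fun f hf => ?_
  rw [c.sum_CF_eq (fun e => eDist c.G' e (c.bmap f)),
    c.sum_CF_eq (fun e => eDist c.G e f),
    ← c.sum_CF_rot (c.rhoE f) (c.rhoE_lt f) (fun e => eDist c.G' e (c.bmap f))]
  exact Finset.sum_le_sum fun a ha => c.eDist_CB (Finset.mem_range.mp ha) hf

lemma block_BC :
    ∑ f ∈ c.BF, ∑ e ∈ c.CF, eDist c.G' (c.bmap f) e ≤
      ∑ f ∈ c.BF, ∑ e ∈ c.CF, eDist c.G f e := by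
  have h1 : ∀ f ∈ c.BF, ∑ e ∈ c.CF, eDist c.G' (c.bmap f) e
      = ∑ e ∈ c.CF, eDist c.G' e (c.bmap f) :=
    fun f _ => Finset.sum_congr rfl fun e _ => eDist_comm _ _ _
  have h2 : ∀ f ∈ c.BF, ∑ e ∈ c.CF, eDist c.G f e = ∑ e ∈ c.CF, eDist c.G e f :=
    fun f _ => Finset.sum_congr rfl fun e _ => eDist_comm _ _ _
  rw [Finset.sum_congr rfl h1, Finset.sum_congr rfl h2, Finset.sum_comm]
  conv_rhs => rw [Finset.sum_comm]
  exact c.block_CB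

lemma block_BB :
    ∑ f ∈ c.BF, ∑ g ∈ c.BF, eDist c.G' (c.bmap f) (c.bmap g) ≤
      ∑ f ∈ c.BF, ∑ g ∈ c.BF, eDist c.G f g :=
  Finset.sum_le_sum fun f hf => Finset.sum_le_sum fun g hg => c.eDist_BB hf hg

lemma block_BB_strict {f0 g0 : Sym2 V} (hf0 : f0 ∈ c.BF) (hg0 : g0 ∈ c.BF)
    (hne : c.rhoE f0 ≠ c.rhoE g0) :
    (∑ f ∈ c.BF, ∑ g ∈ c.BF, eDist c.G' (c.bmap f) (c.bmap g)) + 2 ≤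
      ∑ f ∈ c.BF, ∑ g ∈ c.BF, eDist c.G f g := by
  have hfg : f0 ≠ g0 := fun h => hne (by rw [h])
  rw [← Finset.sum_product', ← Finset.sum_product']
  set P := c.BF ×ˢ c.BF with hP
  set F' : Sym2 V × Sym2 V → ℕ := fun p => eDist c.G' (c.bmap p.1) (c.bmap p.2) with hF'
  set F : Sym2 V × Sym2 V → ℕ := fun p => eDist c.G p.1 p.2 with hF
  have hx1 : (f0, g0) ∈ P := Finset.mem_product.mpr ⟨hf0, hg0⟩
  have hx12 : ((g0, f0) : Sym2 V × Sym2 V) ≠ (f0, g0) := by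
    intro h; exact hfg ((congrArg Prod.fst h) : g0 = f0).symm
  have hx2 : (g0, f0) ∈ P.erase (f0, g0) :=
    Finset.mem_erase.mpr ⟨hx12, Finset.mem_product.mpr ⟨hg0, hf0⟩⟩
  have e1 : ∑ p ∈ P, F' p = ∑ p ∈ (P.erase (f0, g0)).erase (g0, f0) , F' p
      + F' (g0, f0) + F' (f0, g0) := by
    rw [Finset.sum_erase_add _ _ hx2, Finset.sum_erase_add _ _ hx1]
  have e2 : ∑ p ∈ P, F p = ∑ p ∈ (P.erase (f0, g0)).erase (g0, f0) , F p
      + F (g0, f0) + F (f0, g0) := by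
    rw [Finset.sum_erase_add _ _ hx2, Finset.sum_erase_add _ _ hx1]
  have hrest : ∑ p ∈ (P.erase (f0, g0)).erase (g0, f0), F' p ≤
      ∑ p ∈ (P.erase (f0, g0)).erase (g0, f0), F p := by
    refine Finset.sum_le_sum fun p hp => ?_
    have hpP : p ∈ P := Finset.mem_of_mem_erase (Finset.mem_of_mem_erase hp)
    obtain ⟨h1, h2⟩ := Finset.mem_product.mp hpP
    exact c.eDist_BB h1 h2
  have s1 : F' (f0, g0) < F (f0, g0) := c.eDist_BB_lt hf0 hg0 hne
  have s2 : F' (g0, f0) < F (g0, f0) := c.eDist_BB_lt hg0 hf0 (Ne.symm hne)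
  rw [e1, e2]
  omega


lemma S_split :
    ∑ e ∈ c.G.edgeFinset, ∑ f ∈ c.G.edgeFinset, eDist c.G e f =
    (∑ e ∈ c.CF, ∑ f ∈ c.CF, eDist c.G e f) + (∑ e ∈ c.CF, ∑ f ∈ c.BF, eDist c.G e f) +
    ((∑ f ∈ c.BF, ∑ e ∈ c.CF, eDist c.G f e) + (∑ f ∈ c.BF, ∑ g ∈ c.BF, eDist c.G f g)) := by
  rw [c.E_G]
  rw [Finset.sum_union c.disj_CB]
  congr 1
  · rw [← Finset.sum_add_distrib]
    refine Finset.sum_congr rfl fun e _ => ?_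
    rw [Finset.sum_union c.disj_CB]
  · rw [← Finset.sum_add_distrib]
    refine Finset.sum_congr rfl fun e _ => ?_
    rw [Finset.sum_union c.disj_CB]

lemma S'_split :
    ∑ e ∈ c.G'.edgeFinset, ∑ f ∈ c.G'.edgeFinset, eDist c.G' e f =
    (∑ e ∈ c.CF, ∑ f ∈ c.CF, eDist c.G' e f) +
      (∑ e ∈ c.CF, ∑ f ∈ c.BF, eDist c.G' e (c.bmap f)) +
    ((∑ f ∈ c.BF, ∑ e ∈ c.CF, eDist c.G' (c.bmap f) e) +
      (∑ f ∈ c.BF, ∑ g ∈ c.BF, eDist c.G' (c.bmap f) (c.bmap g))) := by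
  rw [c.E_G']
  rw [Finset.sum_union c.disj_CB']
  congr 1
  · rw [← Finset.sum_add_distrib]
    refine Finset.sum_congr rfl fun e _ => ?_
    rw [Finset.sum_union c.disj_CB', c.sum_BF'_eq]
  · rw [c.sum_BF'_eq (fun e => ∑ f ∈ c.CF ∪ c.BF.image c.bmap, eDist c.G' e f),
      ← Finset.sum_add_distrib]
    refine Finset.sum_congr rfl fun f _ => ?_
    rw [Finset.sum_union c.disj_CB', c.sum_BF'_eq]

lemma S'_le_S :
    ∑ e ∈ c.G'.edgeFinset, ∑ f ∈ c.G'.edgeFinset, eDist c.G' e f ≤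
    ∑ e ∈ c.G.edgeFinset, ∑ f ∈ c.G.edgeFinset, eDist c.G e f := by
  rw [c.S_split, c.S'_split]
  have h1 := c.block_CC
  have h2 := c.block_CB
  have h3 := c.block_BC
  have h4 := c.block_BB
  omega

lemma S'_lt_S {f0 g0 : Sym2 V} (hf0 : f0 ∈ c.BF) (hg0 : g0 ∈ c.BF)
    (hne : c.rhoE f0 ≠ c.rhoE g0) :
    (∑ e ∈ c.G'.edgeFinset, ∑ f ∈ c.G'.edgeFinset, eDist c.G' e f) + 2 ≤
    ∑ e ∈ c.G.edgeFinset, ∑ f ∈ c.G.edgeFinset, eDist c.G e f := by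
  rw [c.S_split, c.S'_split]
  have h1 := c.block_CC
  have h2 := c.block_CB
  have h3 := c.block_BC
  have h4 := c.block_BB_strict hf0 hg0 hne
  omega

lemma edgeWiener_le : edgeWiener c.G' ≤ edgeWiener c.G :=
  Nat.div_le_div_right c.S'_le_S

lemma edgeWiener_lt {f0 g0 : Sym2 V} (hf0 : f0 ∈ c.BF) (hg0 : g0 ∈ c.BF)
    (hne : c.rhoE f0 ≠ c.rhoE g0) :
    edgeWiener c.G' < edgeWiener c.G := by
  have := c.S'_lt_S hf0 hg0 hne
  unfold edgeWiener
  omega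


noncomputable def rt (s : ℕ) (x : V) : V :=
  if h : ∃ t, t < c.n ∧ x = c.v t then c.v ((h.choose + s) % c.n) else x

lemma rt_v {t : ℕ} (ht : t < c.n) (s : ℕ) : c.rt s (c.v t) = c.v ((t + s) % c.n) := by
  have h : ∃ u, u < c.n ∧ c.v t = c.v u := ⟨t, ht, rfl⟩
  rw [rt, dif_pos h]
  have hspec := h.choose_spec
  have heq : h.choose = t := c.hinj _ hspec.1 _ ht hspec.2.symm
  rw [heq]

lemma rt_nv {x : V} (hx : ¬ ∃ t, t < c.n ∧ x = c.v t) (s : ℕ) : c.rt s x = x :=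
  dif_neg hx

lemma rt_rt {s t : ℕ} (hst : s + t = c.n) (x : V) : c.rt t (c.rt s x) = x := by
  by_cases hx : ∃ u, u < c.n ∧ x = c.v u
  · obtain ⟨u, hu, rfl⟩ := hx
    rw [c.rt_v hu, c.rt_v (Nat.mod_lt _ c.n_pos), c.mod_cancel hu hst]
  · rw [c.rt_nv hx, c.rt_nv hx]

lemma rt_beta {i0 : ℕ} (hi0 : i0 < c.n) {x : V} (hx : c.rho x = i0) :
    c.rt (c.n - i0) x = c.beta x := by
  by_cases h : ∃ t, t < c.n ∧ x = c.v t
  · obtain ⟨t, ht, rfl⟩ := h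
    rw [c.rho_v ht] at hx
    subst hx
    rw [c.rt_v ht, c.beta_v ht, Nat.add_sub_cancel' (le_of_lt ht), Nat.mod_self]
  · rw [c.rt_nv h, c.beta_nv h]

lemma iso_of_single {i0 : ℕ} (hi0 : i0 < c.n) (hall : ∀ f ∈ c.BF, c.rhoE f = i0) :
    Nonempty (c.G ≃g c.G') := by
  have hinv1 : Function.LeftInverse (c.rt i0) (c.rt (c.n - i0)) :=
    fun x => c.rt_rt (by omega) x
  have hinv2 : Function.RightInverse (c.rt i0) (c.rt (c.n - i0)) :=
    fun x => c.rt_rt (by omega) x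
  set π : Equiv V V := ⟨c.rt (c.n - i0), c.rt i0, hinv1, hinv2⟩ with hπ
  have hrho_edge : ∀ {x y : V}, c.H.Adj x y → c.rho x = i0 := by
    intro x y hxy
    have hf : s(x, y) ∈ c.BF := c.mem_BF_iff.mpr ((SimpleGraph.mem_edgeSet _).mpr hxy)
    rw [c.rho_of_mem hf (Sym2.mem_mk_left x y), hall _ hf]
  have forward : ∀ a b : V, c.G.Adj a b → c.G'.Adj (c.rt (c.n - i0) a) (c.rt (c.n - i0) b) := by
    intro a b h
    rcases c.G_adj_cases h with hH' | ⟨t, ht, hced⟩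
    · rw [c.rt_beta hi0 (hrho_edge hH'), c.rt_beta hi0 (hrho_edge hH'.symm)]
      exact c.beta_compat hH'
    · have key : ∀ x y : V, x = c.v t → y = c.v ((t + 1) % c.n) →
          c.G'.Adj (c.rt (c.n - i0) x) (c.rt (c.n - i0) y) := by
        intro x y hx hy
        rw [hx, hy, c.rt_v ht, c.rt_v c.succ_lt, c.mod_shift]
        exact c.G'_cyc (Nat.mod_lt _ c.n_pos)
      rw [ced, Sym2.eq_iff] at hced
      rcases hced with ⟨ha, hb⟩ | ⟨ha, hb⟩
      · exact key a b ha hb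
      · exact (key b a hb ha).symm
  have backward : ∀ a b : V, c.G'.Adj (c.rt (c.n - i0) a) (c.rt (c.n - i0) b) → c.G.Adj a b := by
    intro a b h
    have hmem : s(c.rt (c.n - i0) a, c.rt (c.n - i0) b) ∈ c.G'.edgeFinset :=
      SimpleGraph.mem_edgeFinset.mpr ((SimpleGraph.mem_edgeSet _).mpr h)
    rw [c.E_G', Finset.mem_union] at hmem
    have hrtinj : Function.Injective (c.rt (c.n - i0)) := hinv1.injective
    rcases hmem with hmem | hmem
    · obtain ⟨t, ht, hced⟩ := c.mem_CF_iff.mp hmem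
      rw [ced, Sym2.eq_iff] at hced
      have key : ∀ x y : V, c.rt (c.n - i0) x = c.v t →
          c.rt (c.n - i0) y = c.v ((t + 1) % c.n) → c.G.Adj x y := by
        intro x y hx hy
        have hx' : x = c.v ((t + i0) % c.n) := by
          have := congrArg (c.rt i0) hx
          rw [hinv1 x, c.rt_v ht] at this
          exact this
        have hy' : y = c.v (((t + 1) % c.n + i0) % c.n) := by
          have := congrArg (c.rt i0) hy
          rw [hinv1 y, c.rt_v c.succ_lt] at this
          exact this
        rw [hx', hy', c.mod_shift]
        exact c.hcyc _ (Nat.mod_lt _ c.n_pos)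
      rcases hced with ⟨hx, hy⟩ | ⟨hx, hy⟩
      · exact key a b hx hy
      · exact (key b a hy hx).symm
    · obtain ⟨f, hf, hfe⟩ := Finset.mem_image.mp hmem
      induction f using Sym2.ind with
      | _ x y =>
        have hxy : c.H.Adj x y := c.mem_BF_iff.mp hf
        rw [bmap, Sym2.map_pair_eq, ← c.rt_beta hi0 (hrho_edge hxy),
          ← c.rt_beta hi0 (hrho_edge hxy.symm), Sym2.eq_iff] at hfe
        rcases hfe with ⟨hx, hy⟩ | ⟨hx, hy⟩
        · rw [hrtinj hx.symm, hrtinj hy.symm]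
          exact c.Hadj_G hxy
        · rw [hrtinj hx.symm, hrtinj hy.symm]
          exact (c.Hadj_G hxy).symm
  exact ⟨⟨π, fun {a b} => ⟨backward a b, forward a b⟩⟩⟩

lemma edgeWiener_eq_of_single {i0 : ℕ} (hi0 : i0 < c.n) (hall : ∀ f ∈ c.BF, c.rhoE f = i0) :
    edgeWiener c.G' = edgeWiener c.G := by
  obtain ⟨α⟩ := c.iso_of_single hi0 hall
  exact edgeWiener_iso α

end Ctx

theorem stmt2 {V : Type*} [Fintype V] (k : ℕ) (hk : 2 ≤ k)
    (G : SimpleGraph V) (hconn : G.Connected)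
    (v : ℕ → V)
    (hinj : ∀ i < 2 * k, ∀ j < 2 * k, v i = v j → i = j)
    (hcyc : ∀ i < 2 * k, G.Adj (v i) (v ((i + 1) % (2 * k))))
    (H : SimpleGraph V)
    (hH : H = G.deleteEdges {e | ∃ i < 2 * k, e = s(v i, v ((i + 1) % (2 * k)))})
    (hsep : ∀ i < 2 * k, ∀ j < 2 * k, i ≠ j → ¬ H.Reachable (v i) (v j))
    (m : ℕ → ℕ)
    (hm : ∀ i < 2 * k,
      m i = (H.edgeFinset.filter (fun f => ∀ x ∈ f, H.Reachable (v i) x)).card)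
    (G' : SimpleGraph V)
    (hG' : G' = SimpleGraph.fromRel (fun a b =>
        (∃ i < 2 * k, a = v i ∧ b = v ((i + 1) % (2 * k))) ∨
        (H.Adj a b ∧ ∀ i, 1 ≤ i → i < 2 * k → a ≠ v i ∧ b ≠ v i) ∨
        (∃ i, 1 ≤ i ∧ i < 2 * k ∧ H.Adj a (v i) ∧ b = v 0))) :
    edgeWiener G' ≤ edgeWiener G ∧
      (edgeWiener G' = edgeWiener G ↔
        ∀ i < 2 * k, ∀ j < 2 * k, i ≠ j → m i = 0 ∨ m j = 0) := by
  set c : Ctx V :=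
    { n := 2 * k, G := G, H := H, G' := G', v := v,
      hn := by omega, hconn := hconn, hinj := hinj, hcyc := hcyc,
      hH := hH, hsep := hsep, hG' := hG' } with hc
  have hmiff : ∀ i, i < 2 * k → (m i ≠ 0 ↔ ∃ f ∈ c.BF, c.rhoE f = i) := by
    intro i hi
    rw [hm i hi]
    constructor
    · intro hne
      have hpos : 0 < (H.edgeFinset.filter (fun f => ∀ x ∈ f, H.Reachable (v i) x)).card :=
        Nat.pos_of_ne_zero hne
      obtain ⟨f, hf⟩ := Finset.card_pos.mp hpos
      rw [Finset.mem_filter] at hf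
      obtain ⟨hfB, hreach⟩ := hf
      have hfB' : f ∈ c.BF := hfB
      refine ⟨f, hfB', ?_⟩
      obtain ⟨x, hx⟩ := sym2_exists_mem f
      rw [← c.rho_of_mem hfB' hx]
      exact c.rho_eq hi ((hreach x hx).symm)
    · rintro ⟨f, hfB, hrho⟩
      apply Finset.card_ne_zero_of_mem (a := f)
      rw [Finset.mem_filter]
      refine ⟨hfB, fun x hx => ?_⟩
      have hr := c.reach_of_mem hfB hx
      rw [hrho] at hr
      exact hr.symm
  refine ⟨c.edgeWiener_le, ?_, ?_⟩
  · intro heq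
    by_contra hcond
    push_neg at hcond
    obtain ⟨i, hi, j, hj, hij, hmi, hmj⟩ := hcond
    obtain ⟨f0, hf0, hrf⟩ := (hmiff i hi).mp hmi
    obtain ⟨g0, hg0, hrg⟩ := (hmiff j hj).mp hmj
    have hlt := c.edgeWiener_lt hf0 hg0 (by rw [hrf, hrg]; exact hij)
    exact (Nat.ne_of_lt hlt) heq
  · intro hcond
    by_cases hex : ∃ i, i < 2 * k ∧ m i ≠ 0
    · obtain ⟨i0, hi0, hmi0⟩ := hex
      have hall : ∀ f ∈ c.BF, c.rhoE f = i0 := by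
        intro f hf
        have hj : c.rhoE f < 2 * k := c.rhoE_lt f
        have hmj : m (c.rhoE f) ≠ 0 := (hmiff _ hj).mpr ⟨f, hf, rfl⟩
        by_contra hne
        rcases hcond _ hj i0 hi0 hne with h | h
        · exact hmj h
        · exact hmi0 h
      exact c.edgeWiener_eq_of_single hi0 hall
    · push_neg at hex
      have hall : ∀ f ∈ c.BF, c.rhoE f = 0 := by
        intro f hf
        have hj : c.rhoE f < 2 * k := c.rhoE_lt f
        have hmj : m (c.rhoE f) ≠ 0 := (hmiff _ hj).mpr ⟨f, hf, rfl⟩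
        exact absurd (hex _ hj) hmj
      exact c.edgeWiener_eq_of_single (show (0:ℕ) < 2 * k by omega) hall
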